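/- Composition Jacobian formula: let (a_i,b_i), 1 ≤ i ≤ n, be pairs with a_i ≥ 1 and 0 ≤ b_i ≤ a_i, and let h = h_{a_1,b_1} ∘ ⋯ ∘ h_{a_n,b_n} where h_{a,b}(x,y) = (1/(a+x),(b+y)/(a+x)). Then for all (x,y) ∈ [0,1]², |Jac h (x,y)| = 1/(q_n + x·q_{n−1})³, where q_k is defined by q_{−1}=0, q_0=1, q_{k+1}=a_{k+1}q_k + q_{k−1}. -/

import Mathlib

open scoped BigOperators

/-- Inverse branch `h_{a,b}(x,y) = (1/(a+x), (b+y)/(a+x))` of the Ostrowski map. -/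
noncomputable def hinv (a b : ℤ) (p : ℝ × ℝ) : ℝ × ℝ :=
  (1 / ((a : ℝ) + p.1), ((b : ℝ) + p.2) / ((a : ℝ) + p.1))

/-- `hcomp a b n = h_{a 1, b 1} ∘ ⋯ ∘ h_{a n, b n}`. -/
noncomputable def hcomp (a b : ℕ → ℤ) : ℕ → (ℝ × ℝ → ℝ × ℝ)
  | 0 => id
  | n + 1 => hcomp a b n ∘ hinv (a (n + 1)) (b (n + 1))

/-- `qrec a n = q_{n-1}`, with `q_{-1} = 0`, `q_0 = 1`, `q_{k+1} = a_{k+1} q_k + q_{k-1}`. -/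
def qrec (a : ℕ → ℤ) : ℕ → ℤ
  | 0 => 0
  | 1 => 1
  | n + 2 => a (n + 1) * qrec a (n + 1) + qrec a n

/-- `prec a n = p_{n-1}`, with `p_{-1} = 1`, `p_0 = 0`, `p_{k+1} = a_{k+1} p_k + p_{k-1}`. -/
def prec (a : ℕ → ℤ) : ℕ → ℤ
  | 0 => 1
  | 1 => 0
  | n + 2 => a (n + 1) * prec a (n + 1) + prec a n

/-!
Each branch `h_{a,b}` has lower-triangular Jacobian `[[-1/u², 0], [*, 1/u]]` with `u = a + x`,
hence determinant `-1/u³`. By the chain rule the Jacobian of the composition at `(x, y)` is the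
product of these factors along the orbit, and the recursion for `q` telescopes it:
`(q_n + x' q_{n-1}) (a_{n+1} + x) = q_{n+1} + x q_n` for `x' = 1/(a_{n+1} + x)`.
Since `a_i ≥ 1`, the first coordinate stays nonnegative along the orbit, so no `u` vanishes.
-/

open ContinuousLinearMap

theorem det_prod_smul_fst {𝕜 : Type*} [NontriviallyNormedField 𝕜] (α β γ : 𝕜) :
    ((α • fst 𝕜 𝕜 𝕜).prod (β • fst 𝕜 𝕜 𝕜 + γ • snd 𝕜 𝕜 𝕜)).det = α * γ := by
  rw [ContinuousLinearMap.det, ← LinearMap.det_toMatrix (Module.Basis.finTwoProd 𝕜),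
    Matrix.det_fin_two]
  simp [LinearMap.toMatrix_apply]

theorem ContinuousLinearMap.det_comp {R M : Type*} [CommRing R] [TopologicalSpace M]
    [AddCommGroup M] [Module R M] (f g : M →L[R] M) : (f.comp g).det = f.det * g.det :=
  LinearMap.det_comp (f : M →ₗ[R] M) g

section hinv

variable (a b : ℤ) {p : ℝ × ℝ}

theorem hasFDerivAt_hinv (hp : (a : ℝ) + p.1 ≠ 0) :
    HasFDerivAt (hinv a b)
      ((-(((a : ℝ) + p.1) ^ 2)⁻¹ • fst ℝ ℝ ℝ).prod
        ((-((b : ℝ) + p.2) / ((a : ℝ) + p.1) ^ 2) • fst ℝ ℝ ℝ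
          + ((a : ℝ) + p.1)⁻¹ • snd ℝ ℝ ℝ)) p := by
  have hu : HasFDerivAt (fun q : ℝ × ℝ => ((a : ℝ) + q.1)⁻¹)
      (-(((a : ℝ) + p.1) ^ 2)⁻¹ • fst ℝ ℝ ℝ) p :=
    (hasDerivAt_inv hp).comp_hasFDerivAt p (hasFDerivAt_fst.const_add _)
  have hv := (hasFDerivAt_snd (p := p)).const_add (b : ℝ) |>.mul hu
  have hinv_eq : hinv a b =
      fun q : ℝ × ℝ => (((a : ℝ) + q.1)⁻¹, ((b : ℝ) + q.2) * ((a : ℝ) + q.1)⁻¹) := by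
    funext q
    simp [hinv, div_eq_mul_inv]
  rw [hinv_eq]
  refine hu.prodMk (hv.congr_fderiv ?_)
  ext <;> simp; ring

theorem differentiableAt_hinv (hp : (a : ℝ) + p.1 ≠ 0) : DifferentiableAt ℝ (hinv a b) p :=
  (hasFDerivAt_hinv a b hp).differentiableAt

theorem det_fderiv_hinv (hp : (a : ℝ) + p.1 ≠ 0) :
    (fderiv ℝ (hinv a b) p).det = -(((a : ℝ) + p.1) ^ 3)⁻¹ := by
  rw [(hasFDerivAt_hinv a b hp).fderiv, det_prod_smul_fst]
  field_simp

theorem int_cast_add_fst_ne_zero {a : ℤ} (ha : 1 ≤ a) (hp : 0 ≤ p.1) : (a : ℝ) + p.1 ≠ 0 := by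
  have : (1 : ℝ) ≤ a := by exact_mod_cast ha
  linarith

theorem hinv_fst_nonneg {a : ℤ} (ha : 0 ≤ a) (hp : 0 ≤ p.1) : 0 ≤ (hinv a b p).1 := by
  have : (0 : ℝ) ≤ a := by exact_mod_cast ha
  simp only [hinv]
  positivity

end hinv

section qrec

variable (a : ℕ → ℤ)

theorem qrec_add_two_add_mul (n : ℕ) (x : ℝ) (hx : (a (n + 1) : ℝ) + x ≠ 0) :
    (qrec a (n + 2) : ℝ) + x * qrec a (n + 1)
      = ((qrec a (n + 1) : ℝ) + ((a (n + 1) : ℝ) + x)⁻¹ * qrec a n) * ((a (n + 1) : ℝ) + x) := by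
  push_cast [qrec]
  field_simp
  ring

theorem qrec_nonneg_and_one_le_succ (n : ℕ) (ha : ∀ i, 1 ≤ i → i ≤ n → 1 ≤ a i) :
    0 ≤ qrec a n ∧ 1 ≤ qrec a (n + 1) := by
  induction n with
  | zero => simp [qrec]
  | succ n ih =>
    obtain ⟨hq₀, hq₁⟩ := ih fun i hi hin => ha i hi (hin.trans n.le_succ)
    have han : 1 ≤ a (n + 1) := ha (n + 1) (Nat.le_add_left 1 n) le_rfl
    refine ⟨by linarith, ?_⟩
    rw [qrec]
    nlinarith

end qrec

section hcomp

variable (a b : ℕ → ℤ)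

theorem differentiableAt_hcomp (n : ℕ) (ha : ∀ i, 1 ≤ i → i ≤ n → 1 ≤ a i) {p : ℝ × ℝ}
    (hp : 0 ≤ p.1) : DifferentiableAt ℝ (hcomp a b n) p := by
  induction n generalizing p with
  | zero => exact differentiableAt_id
  | succ n ih =>
    have han : 1 ≤ a (n + 1) := ha (n + 1) (Nat.le_add_left 1 n) le_rfl
    have hu := int_cast_add_fst_ne_zero han hp
    exact (ih (fun i hi hin => ha i hi (hin.trans n.le_succ))
      (hinv_fst_nonneg _ (by omega) hp)).comp p (differentiableAt_hinv _ _ hu)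

theorem det_fderiv_hcomp (n : ℕ) (ha : ∀ i, 1 ≤ i → i ≤ n → 1 ≤ a i) {p : ℝ × ℝ}
    (hp : 0 ≤ p.1) :
    (fderiv ℝ (hcomp a b n) p).det = (-1) ^ n / ((qrec a (n + 1) : ℝ) + p.1 * qrec a n) ^ 3 := by
  induction n generalizing p with
  | zero =>
    simp only [hcomp, fderiv_id, qrec, Int.cast_one, Int.cast_zero, mul_zero, add_zero, pow_zero,
      one_pow, div_one]
    exact LinearMap.det_id
  | succ n ih =>
    have ha' : ∀ i, 1 ≤ i → i ≤ n → 1 ≤ a i := fun i hi hin => ha i hi (hin.trans n.le_succ)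
    have han : 1 ≤ a (n + 1) := ha (n + 1) (Nat.le_add_left 1 n) le_rfl
    have hu := int_cast_add_fst_ne_zero han hp
    have hp' := hinv_fst_nonneg (b (n + 1)) (by omega : (0 : ℤ) ≤ a (n + 1)) hp
    rw [hcomp, fderiv_comp p (differentiableAt_hcomp a b n ha' hp') (differentiableAt_hinv _ _ hu),
      ContinuousLinearMap.det_comp, ih ha' hp', det_fderiv_hinv _ _ hu,
      qrec_add_two_add_mul a n p.1 hu]
    simp only [hinv, one_div]
    -- `ring` would expand the cubes of these sums before inverting them
    generalize (qrec a (n + 1) : ℝ) + _ = S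
    generalize (a (n + 1) : ℝ) + p.1 = u
    ring

end hcomp

theorem hcomp_jacobian_general (n : ℕ) (a b : ℕ → ℤ)
    (ha : ∀ i, 1 ≤ i → i ≤ n → 1 ≤ a i)
    (x y : ℝ) (hx : x ∈ Set.Icc (0 : ℝ) 1) :
    |(fderiv ℝ (hcomp a b n) (x, y)).det|
      = 1 / ((qrec a (n + 1) : ℝ) + x * (qrec a n : ℝ)) ^ 3 := by
  obtain ⟨hq₀, hq₁⟩ := qrec_nonneg_and_one_le_succ a n ha
  have hpos : 0 < (qrec a (n + 1) : ℝ) + x * qrec a n := by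
    have : (1 : ℝ) ≤ qrec a (n + 1) := by exact_mod_cast hq₁
    have : (0 : ℝ) ≤ x * qrec a n := mul_nonneg hx.1 (by exact_mod_cast hq₀)
    linarith
  rw [det_fderiv_hcomp a b n ha hx.1, abs_div, abs_pow, abs_neg, abs_one, one_pow,
    abs_of_pos (pow_pos hpos 3)]

/-- composition Jacobian formula:
`|Jac (h_{a_1,b_1} ∘ ⋯ ∘ h_{a_n,b_n})(x,y)| = 1/(q_n + x q_{n-1})³`. -/
theorem hcomp_jacobian (n : ℕ) (a b : ℕ → ℤ)
    (ha : ∀ i, 1 ≤ i → i ≤ n → 1 ≤ a i)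
    (hb : ∀ i, 1 ≤ i → i ≤ n → 0 ≤ b i ∧ b i ≤ a i)
    (x y : ℝ) (hx : x ∈ Set.Icc (0 : ℝ) 1) (hy : y ∈ Set.Icc (0 : ℝ) 1) :
    |(fderiv ℝ (hcomp a b n) (x, y)).det|
      = 1 / ((qrec a (n + 1) : ℝ) + x * (qrec a n : ℝ)) ^ 3 :=
  hcomp_jacobian_general n a b ha x y hx
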